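/- arXiv:2310.06192 — 2 statements merged into one kernel-verified Lean document; each statement's English description precedes it below -/
import Mathlib

section
/- For all m ≥ 1 and k ≥ 1, the grid graph P_m □ P_k (the Cartesian product of the path on m vertices with the path on k vertices) is stackable. -/
/-- A cup-stacking move in graph `G`: all cups from `u` are moved to `v`, where
`u ≠ v`, both have at least one cup, and `dist G u v = C u`. -/
def CupMove {V : Type*} [DecidableEq V] (G : SimpleGraph V) (C C' : V → ℕ) : Prop :=
  ∃ u v : V, u ≠ v ∧ 1 ≤ C u ∧ 1 ≤ C v ∧ G.dist u v = C u ∧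
    ∀ w, C' w = if w = u then 0 else if w = v then C u + C v else C w

/-- `G` is `(C, r)`-stackable: some finite sequence of cup-stacking moves starting
from `C` reaches the configuration with all `|C|` cups on `r` and none elsewhere. -/
def IsStackableConf {V : Type*} [Fintype V] [DecidableEq V]
    (G : SimpleGraph V) (C : V → ℕ) (r : V) : Prop :=
  Relation.ReflTransGen (CupMove G) C (fun w => if w = r then ∑ v, C v else 0)

/-- `G` is `r`-stackable: `(𝟏, r)`-stackable where `𝟏` has one cup on each vertex. -/
def IsStackableAt {V : Type*} [Fintype V] [DecidableEq V]
    (G : SimpleGraph V) (r : V) : Prop :=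
  IsStackableConf G (fun _ => 1) r

/-- `G` is stackable: `r`-stackable for every vertex `r`. -/
def IsStackable {V : Type*} [Fintype V] [DecidableEq V] (G : SimpleGraph V) : Prop :=
  ∀ r : V, IsStackableAt G r


/-!
A geodesic line of `L` single cups containing a vertex `x g` at distance exactly `L` from a target
`t` can be stacked onto `t`: stack the cups on either side of `x g` onto `x g`, then move all `L`
cups to `t`. A segment of `g` cups goes onto its neighbour by first being stacked, reflected, onto
its far end, which then lies at distance `g` from that neighbour.

Around `t = (a, b)` the grid minus `t` splits into four pinwheel quadrants; each is a product of
a ray of the first path starting at `a` and a ray of the second starting at `b`, exactly one of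
them starting one step away from the centre, so its vertex `(u, v)` lies at distance `u + v + 1`
from `t`. Cut such an `M × N` rectangle into its rows if `M ≤ N` (its columns otherwise): row `u`
has length `N` and its vertex `(u, N - 1 - u)` lies at distance `N` from `t`.
-/

open Finset

namespace SimpleGraph

lemma dist_boxProd {α β : Type*} {G : SimpleGraph α} {H : SimpleGraph β} (hG : G.Preconnected)
    (hH : H.Preconnected) (x y : α × β) :
    (G □ H).dist x y = G.dist x.1 y.1 + H.dist x.2 y.2 := by
  have h := (reachable_boxProd.mpr ⟨hG x.1 y.1, hH x.2 y.2⟩).coe_dist_eq_edist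
  rw [edist_boxProd, ← (hG _ _).coe_dist_eq_edist, ← (hH _ _).coe_dist_eq_edist] at h
  exact_mod_cast h

lemma pathGraph_dist {n : ℕ} (i j : Fin n) : (pathGraph n).dist i j = Nat.dist i j := by
  have hle : ∀ (d : ℕ) (i j : Fin n), i.val + d = j.val → (pathGraph n).dist i j ≤ d := by
    intro d
    induction d with
    | zero =>
      intro i j h
      obtain rfl : i = j := Fin.ext (by omega)
      simp
    | succ d ih =>
      intro i j h
      let j' : Fin n := ⟨i + d, by omega⟩
      have hadj : (pathGraph n).Adj j' j := pathGraph_adj.mpr (.inl (by simp [j']; omega))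
      calc (pathGraph n).dist i j ≤ (pathGraph n).dist i j' + (pathGraph n).dist j' j :=
            (pathGraph_preconnected n i j').dist_triangle_left j
        _ ≤ d + 1 := add_le_add (ih i j' rfl) (dist_eq_one_iff_adj.mpr hadj).le
  apply le_antisymm
  · rcases le_total i.val j.val with hij | hji
    · exact (hle (j - i) i j (by omega)).trans_eq (by simp only [Nat.dist]; omega)
    · rw [dist_comm]
      exact (hle (i - j) j i (by omega)).trans_eq (by simp only [Nat.dist]; omega)
  · obtain ⟨w, hw⟩ := (pathGraph_preconnected n i j).exists_walk_length_eq_dist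
    rw [← hw]
    clear hw
    induction w with
    | nil => simp
    | cons hadj _ ih =>
      rw [pathGraph_adj] at hadj
      simp only [Walk.length_cons, Nat.dist] at ih ⊢
      omega

end SimpleGraph

namespace CupStacking

section Configurations

variable {V : Type*} [DecidableEq V]

def stackOnto (C : V → ℕ) (S : Finset V) (t : V) : V → ℕ :=
  fun w => if w = t then ∑ v ∈ insert t S, C v else if w ∈ S then 0 else C w

lemma stackOnto_apply_self (C : V → ℕ) (S : Finset V) (t : V) :
    stackOnto C S t t = ∑ v ∈ insert t S, C v :=
  if_pos rfl

lemma stackOnto_apply_of_ne {C : V → ℕ} {S : Finset V} {t w : V} (hwt : w ≠ t) (hwS : w ∉ S) :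
    stackOnto C S t w = C w := by
  simp [stackOnto, hwt, hwS]

lemma le_stackOnto_apply_self (C : V → ℕ) (S : Finset V) (t : V) : C t ≤ stackOnto C S t t :=
  (stackOnto_apply_self C S t).symm ▸ single_le_sum (fun _ _ => Nat.zero_le _) (mem_insert_self t S)

@[simp]
lemma stackOnto_empty (C : V → ℕ) (t : V) : stackOnto C ∅ t = C := by
  funext w
  by_cases hw : w = t <;> simp [stackOnto, hw]

lemma stackOnto_insert_self (C : V → ℕ) (S : Finset V) (t : V) :
    stackOnto C (insert t S) t = stackOnto C S t := by
  funext w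
  by_cases hw : w = t <;> simp [stackOnto, hw]

lemma stackOnto_univ [Fintype V] (C : V → ℕ) (t : V) :
    stackOnto C univ t = fun w => if w = t then ∑ v, C v else 0 := by
  funext w
  by_cases hw : w = t <;> simp [stackOnto, hw]

lemma sum_stackOnto {C : V → ℕ} {S U : Finset V} {s : V} (hs : s ∈ U) :
    ∑ v ∈ U, stackOnto C S s v = ∑ v ∈ insert s S ∪ U, C v := by
  set A := insert s S
  rw [← sum_filter_add_sum_filter_not U (· ∈ A), ← union_sdiff_self_eq_union,
    sum_union disjoint_sdiff, sdiff_eq_filter]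
  congr 1
  · rw [sum_congr rfl (g := fun v => if v = s then ∑ w ∈ A, C w else 0), sum_ite_eq']
    · simp [hs, A]
    · intro v hv
      simp only [mem_filter, A, mem_insert] at hv
      by_cases hvs : v = s
      · rw [if_pos hvs, hvs, stackOnto_apply_self]
      · simp [stackOnto, hvs, hv.2.resolve_left hvs]
  · refine sum_congr rfl fun v hv => ?_
    simp only [mem_filter, A, mem_insert, not_or] at hv
    exact stackOnto_apply_of_ne hv.2.1 hv.2.2

lemma stackOnto_stackOnto (C : V → ℕ) (S T : Finset V) {s t : V} (hs : s ∈ insert t T) :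
    stackOnto (stackOnto C S s) T t = stackOnto C (S ∪ T) t := by
  funext w
  by_cases hwt : w = t
  · subst hwt
    rw [stackOnto_apply_self, stackOnto_apply_self, sum_stackOnto hs]
    congr 1
    ext v
    simp only [mem_union, mem_insert] at hs ⊢
    grind
  · by_cases hwT : w ∈ T
    · simp [stackOnto, hwt, hwT]
    · have hws : w ≠ s := fun h => by simp_all
      simp [stackOnto, hwt, hwT, hws]

end Configurations

section Stacking

variable {V : Type*} [DecidableEq V] (G : SimpleGraph V)

def CanStack (C : V → ℕ) (S : Finset V) (t : V) : Prop :=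
  Relation.ReflTransGen (CupMove G) C (stackOnto C S t)

def UnitStackable (S : Finset V) (t : V) : Prop :=
  ∀ C : V → ℕ, (∀ v ∈ S, C v = 1) → 1 ≤ C t → CanStack G C S t

variable {G}

lemma canStack_singleton {C : V → ℕ} {u v : V} (huv : u ≠ v) (hu : 1 ≤ C u) (hv : 1 ≤ C v)
    (hdist : G.dist u v = C u) : CanStack G C {u} v := by
  refine .single ⟨u, v, huv, hu, hv, hdist, fun w => ?_⟩
  by_cases hwu : w = u
  · simp [stackOnto, hwu, huv]
  · by_cases hwv : w = v
    · subst hwv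
      simp [stackOnto, huv.symm, sum_pair huv.symm, add_comm]
    · simp [stackOnto, hwu, hwv]

lemma CanStack.trans {C : V → ℕ} {S T : Finset V} {s t : V} (h₁ : CanStack G C S s)
    (h₂ : CanStack G (stackOnto C S s) T t) (hs : s ∈ insert t T) : CanStack G C (S ∪ T) t := by
  unfold CanStack at *
  rw [← stackOnto_stackOnto C S T hs]
  exact h₁.trans h₂

lemma unitStackable_empty (t : V) : UnitStackable G ∅ t := fun C _ _ => by
  unfold CanStack
  rw [stackOnto_empty]

lemma UnitStackable.union {S T : Finset V} {t : V} (hS : UnitStackable G S t)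
    (hT : UnitStackable G T t) (hST : Disjoint S T) (htT : t ∉ T) :
    UnitStackable G (S ∪ T) t := by
  intro C hC ht
  refine (hS C (fun v hv => hC v (mem_union_left T hv)) ht).trans (hT _ (fun v hv => ?_) ?_)
    (mem_insert_self t T)
  · rw [stackOnto_apply_of_ne (ne_of_mem_of_not_mem hv htT) (disjoint_right.mp hST hv)]
    exact hC v (mem_union_right S hv)
  · exact ht.trans (le_stackOnto_apply_self C S t)

lemma unitStackable_biUnion {ι : Type*} {I : Finset ι} {S : ι → Finset V} {t : V}
    (hS : ∀ i ∈ I, UnitStackable G (S i) t) (ht : ∀ i ∈ I, t ∉ S i)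
    (hdisj : (I : Set ι).PairwiseDisjoint S) : UnitStackable G (I.biUnion S) t := by
  classical
  induction I using Finset.induction_on with
  | empty => exact unitStackable_empty t
  | insert i I hi ih =>
    rw [biUnion_insert, union_comm]
    refine (ih (fun j hj => hS j (mem_insert_of_mem hj)) (fun j hj => ht j (mem_insert_of_mem hj))
      (hdisj.subset (by simp))).union (hS i (mem_insert_self i I)) ?_ (ht i (mem_insert_self i I))
    rw [disjoint_biUnion_left]
    exact fun j hj => hdisj (by simp [hj]) (by simp) (ne_of_mem_of_not_mem hj hi)

lemma UnitStackable.insert_of_dist_eq {S : Finset V} {s t : V} (hS : UnitStackable G S s)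
    (ht : t ∉ insert s S) (hdist : G.dist s t = #(insert s S)) :
    UnitStackable G (insert s S) t := by
  intro C hC hCt
  have hts : t ≠ s := fun h => ht (h ▸ mem_insert_self s S)
  have hheight : stackOnto C S s s = #(insert s S) := by
    rw [stackOnto_apply_self, sum_const_nat hC, mul_one]
  have hmove : CanStack G (stackOnto C S s) {s} t := by
    refine canStack_singleton hts.symm ?_ ?_ (hdist.trans hheight.symm)
    · rw [hheight]
      exact card_pos.mpr (insert_nonempty s S)
    · rwa [stackOnto_apply_of_ne hts fun h => ht (mem_insert_of_mem h)]
  have := (hS C (fun v hv => hC v (mem_insert_of_mem hv)) (hC s (mem_insert_self s S)).ge).trans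
    hmove (by simp)
  rwa [union_singleton] at this

lemma UnitStackable.isStackableAt [Fintype V] {S : Finset V} {t : V} (h : UnitStackable G S t)
    (hS : insert t S = univ) : IsStackableAt G t := by
  have := h (fun _ => 1) (fun _ _ => rfl) le_rfl
  unfold CanStack at this
  rwa [← stackOnto_insert_self, hS, stackOnto_univ] at this

end Stacking

section Geodesics

variable {V : Type*} {G : SimpleGraph V}

def IsGeodesicSeq (G : SimpleGraph V) (x : ℕ → V) (L : ℕ) : Prop :=
  ∀ i < L, ∀ j < L, G.dist (x i) (x j) = Nat.dist i j

namespace IsGeodesicSeq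

variable {x : ℕ → V} {L : ℕ}

lemma mono (hx : IsGeodesicSeq G x L) {L' : ℕ} (hL : L' ≤ L) : IsGeodesicSeq G x L' :=
  fun i hi j hj => hx i (by omega) j (by omega)

lemma reflect (hx : IsGeodesicSeq G x L) : IsGeodesicSeq G (fun i => x (L - 1 - i)) L := by
  intro i hi j hj
  rw [hx _ (by omega) _ (by omega)]
  simp only [Nat.dist]
  omega

lemma injOn (hx : IsGeodesicSeq G x L) : Set.InjOn x (Set.Iio L) := by
  intro i hi j hj hij
  have := hx i hi j hj
  rw [hij, SimpleGraph.dist_self] at this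
  exact Nat.eq_of_dist_eq_zero this.symm

variable [DecidableEq V]

lemma apply_mem_image_iff (hx : IsGeodesicSeq G x L) {I : Finset ℕ} (hI : I ⊆ range L)
    {i : ℕ} (hi : i < L) : x i ∈ I.image x ↔ i ∈ I := by
  refine ⟨fun h => ?_, mem_image_of_mem x⟩
  obtain ⟨j, hj, hji⟩ := mem_image.mp h
  rwa [← hx.injOn (by simpa using hI hj) hi hji]

lemma card_image (hx : IsGeodesicSeq G x L) : #((range L).image x) = L := by
  rw [card_image_of_injOn (by simpa using hx.injOn), card_range]

end IsGeodesicSeq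

variable [DecidableEq V]

lemma image_range_reflect (x : ℕ → V) (c n : ℕ) :
    (range n).image (fun i => x (c - i)) = (Ico (c + 1 - n) (c + 1)).image x := by
  have h := Nat.Ico_image_const_sub_eq_Ico (b := n) (Nat.zero_le c)
  rw [Nat.sub_zero] at h
  rw [← h, image_image, range_eq_Ico]
  rfl

theorem IsGeodesicSeq.unitStackable_image_range {x : ℕ → V} {g : ℕ}
    (hx : IsGeodesicSeq G x (g + 1)) : UnitStackable G ((range g).image x) (x g) := by
  induction g generalizing x with
  | zero => simpa using unitStackable_empty (x 0)
  | succ g ih =>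
    have hrefl := ih (x := fun i => x (g - i)) ((hx.mono (by omega)).reflect)
    rw [image_range_reflect, Nat.add_sub_cancel_left, Nat.sub_self] at hrefl
    have hset : insert (x 0) ((Ico 1 (g + 1)).image x) = (range (g + 1)).image x := by
      rw [← image_insert]
      congr 1
      ext i
      simp only [mem_insert, mem_Ico, mem_range]
      omega
    rw [← hset]
    refine hrefl.insert_of_dist_eq ?_ ?_
    · rw [hset, hx.apply_mem_image_iff (range_subset_range.mpr (by omega)) (by omega)]
      simp
    · rw [hset, (hx.mono (by omega)).card_image, hx 0 (by omega) (g + 1) (by omega)]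
      simp [Nat.dist]

theorem IsGeodesicSeq.unitStackable_of_dist_eq {x : ℕ → V} {L g : ℕ} {t : V}
    (hx : IsGeodesicSeq G x L) (hg : g < L) (ht : G.dist (x g) t = L) :
    UnitStackable G ((range L).image x) t := by
  have hleft := (hx.mono (Nat.succ_le_of_lt hg)).unitStackable_image_range
  have hright := (hx.reflect.mono (show L - 1 - g + 1 ≤ L by omega)).unitStackable_image_range
  rw [image_range_reflect, show L - 1 - (L - 1 - g) = g by omega,
    show L - 1 + 1 - (L - 1 - g) = g + 1 by omega, show L - 1 + 1 = L by omega] at hright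
  have hdisj : Disjoint ((range g).image x) ((Ico (g + 1) L).image x) := by
    rw [disjoint_left]
    intro v hv hv'
    obtain ⟨i, hi, rfl⟩ := mem_image.mp hv'
    rw [mem_Ico] at hi
    rw [hx.apply_mem_image_iff (range_subset_range.mpr hg.le) hi.2, mem_range] at hv
    omega
  have hgR : x g ∉ (Ico (g + 1) L).image x := by
    rw [hx.apply_mem_image_iff (fun i hi => mem_range.mpr (mem_Ico.mp hi).2) hg]
    simp
  have hset : insert (x g) ((range g).image x ∪ (Ico (g + 1) L).image x) = (range L).image x := by
    rw [← image_union, ← image_insert]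
    congr 1
    ext i
    simp only [mem_insert, mem_union, mem_Ico, mem_range]
    omega
  rw [← hset]
  refine (hleft.union hright hdisj hgR).insert_of_dist_eq ?_ ?_
  · rw [hset]
    intro htL
    obtain ⟨i, hi, rfl⟩ := mem_image.mp htL
    rw [mem_range] at hi
    have := hx g hg i hi
    simp only [Nat.dist] at this
    omega
  · rw [hset, hx.card_image, ht]

end Geodesics

section Rectangles

variable {V : Type*} [DecidableEq V] {G : SimpleGraph V}

theorem unitStackable_rect_of_le {f : ℕ → ℕ → V} {M N : ℕ} {t : V} (hMN : M ≤ N)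
    (hf : ∀ u < M, ∀ u' < M, ∀ v < N, ∀ v' < N,
      G.dist (f u v) (f u' v') = Nat.dist u u' + Nat.dist v v')
    (ht : ∀ u < M, ∀ v < N, G.dist (f u v) t = u + v + 1) :
    UnitStackable G ((range M ×ˢ range N).image fun p => f p.1 p.2) t := by
  have hrows : ((range M ×ˢ range N).image fun p => f p.1 p.2) =
      (range M).biUnion fun u => (range N).image (f u) := by
    ext
    simp [and_assoc]
  rw [hrows]
  refine unitStackable_biUnion (fun u hu => ?_) (fun u hu hmem => ?_) ?_
  · rw [mem_range] at hu
    refine IsGeodesicSeq.unitStackable_of_dist_eq (g := N - 1 - u)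
      (fun v hv v' hv' => by simpa using hf u hu u hu v hv v' hv') (by omega) ?_
    rw [ht u hu _ (by omega)]
    omega
  · obtain ⟨v, hv, hvt⟩ := mem_image.mp hmem
    have := ht u (mem_range.mp hu) v (mem_range.mp hv)
    rw [hvt, SimpleGraph.dist_self] at this
    omega
  · intro u hu u' hu' huu'
    rw [Function.onFun, disjoint_left]
    intro w hw hw'
    obtain ⟨v, hv, rfl⟩ := mem_image.mp hw
    obtain ⟨v', hv', hvv'⟩ := mem_image.mp hw'
    have := hf u (mem_range.mp hu) u' (mem_range.mp hu') v (mem_range.mp hv) v' (mem_range.mp hv')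
    rw [← hvv', SimpleGraph.dist_self] at this
    exact huu' (Nat.eq_of_dist_eq_zero (by omega))

theorem unitStackable_rect {f : ℕ → ℕ → V} {M N : ℕ} {t : V}
    (hf : ∀ u < M, ∀ u' < M, ∀ v < N, ∀ v' < N,
      G.dist (f u v) (f u' v') = Nat.dist u u' + Nat.dist v v')
    (ht : ∀ u < M, ∀ v < N, G.dist (f u v) t = u + v + 1) :
    UnitStackable G ((range M ×ˢ range N).image fun p => f p.1 p.2) t := by
  rcases le_total M N with hMN | hNM
  · exact unitStackable_rect_of_le hMN hf ht
  · have h := unitStackable_rect_of_le (f := fun v u => f u v) hNM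
      (fun v hv v' hv' u hu u' hu' => by rw [hf u hu u' hu' v hv v' hv', add_comm])
      (fun v hv u hu => by rw [ht u hu v hv, add_comm v])
    rwa [← image_swap_product, image_image] at h

def IsGeodesicRay (G : SimpleGraph V) (a : V) (c : ℕ) (A : Finset V) : Prop :=
  ∃ (p : ℕ → V) (M : ℕ), IsGeodesicSeq G p M ∧ (∀ u < M, G.dist (p u) a = u + c) ∧
    (range M).image p = A

theorem unitStackable_boxProd {α β : Type*} [DecidableEq α] [DecidableEq β]
    {G : SimpleGraph α} {H : SimpleGraph β} (hG : G.Preconnected) (hH : H.Preconnected)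
    {a : α} {b : β} {c c' : ℕ} {A : Finset α} {B : Finset β} (hA : IsGeodesicRay G a c A)
    (hB : IsGeodesicRay H b c' B) (hc : c + c' = 1) : UnitStackable (G □ H) (A ×ˢ B) (a, b) := by
  obtain ⟨p, M, hp, hpa, rfl⟩ := hA
  obtain ⟨q, N, hq, hqb, rfl⟩ := hB
  rw [← prodMap_image_product]
  exact unitStackable_rect (f := fun u v => (p u, q v))
    (fun u hu u' hu' v hv v' hv' => by rw [SimpleGraph.dist_boxProd hG hH, hp u hu u' hu', hq v hv v' hv'])
    (fun u hu v hv => by rw [SimpleGraph.dist_boxProd hG hH, hpa u hu, hqb v hv]; omega)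

end Rectangles

section Paths

open SimpleGraph

variable {n : ℕ}

lemma isGeodesicRay_pathGraph_up (a : Fin n) (c : ℕ) :
    IsGeodesicRay (pathGraph n) a c {i | (a : ℕ) + c ≤ i} := by
  have : NeZero n := NeZero.of_pos a.pos
  have hp : ∀ u < n - a - c, (Fin.ofNat n (a + c + u) : ℕ) = a + c + u := fun u hu => by
    rw [Fin.val_ofNat, Nat.mod_eq_of_lt (by omega)]
  refine ⟨fun u => Fin.ofNat n (a + c + u), n - a - c, fun u hu u' hu' => ?_, fun u hu => ?_, ?_⟩
  · rw [pathGraph_dist, hp u hu, hp u' hu']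
    simp only [Nat.dist]
    omega
  · rw [pathGraph_dist, hp u hu]
    simp only [Nat.dist]
    omega
  · ext i
    simp only [mem_image, mem_range, mem_filter, mem_univ, true_and]
    refine ⟨?_, fun hi => ⟨i - a - c, by omega, Fin.ext ?_⟩⟩
    · rintro ⟨u, hu, rfl⟩
      rw [hp u hu]
      omega
    · rw [hp _ (by omega)]
      omega

lemma isGeodesicRay_pathGraph_down (a : Fin n) (c : ℕ) :
    IsGeodesicRay (pathGraph n) a c {i | (i : ℕ) + c ≤ a} := by
  have : NeZero n := NeZero.of_pos a.pos
  have hp : ∀ u < a + 1 - c, (Fin.ofNat n (a - c - u) : ℕ) = a - c - u := fun u hu => by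
    rw [Fin.val_ofNat, Nat.mod_eq_of_lt (by omega)]
  refine ⟨fun u => Fin.ofNat n (a - c - u), a + 1 - c, fun u hu u' hu' => ?_, fun u hu => ?_, ?_⟩
  · rw [pathGraph_dist, hp u hu, hp u' hu']
    simp only [Nat.dist]
    omega
  · rw [pathGraph_dist, hp u hu]
    simp only [Nat.dist]
    omega
  · ext i
    simp only [mem_image, mem_range, mem_filter, mem_univ, true_and]
    refine ⟨?_, fun hi => ⟨a - c - i, by omega, Fin.ext ?_⟩⟩
    · rintro ⟨u, hu, rfl⟩
      rw [hp u hu]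
      omega
    · rw [hp _ (by omega)]
      omega

end Paths

end CupStacking

open CupStacking

theorem grid_stackable_general (m k : ℕ) :
    IsStackable ((SimpleGraph.pathGraph m).boxProd (SimpleGraph.pathGraph k)) := by
  rintro ⟨a, b⟩
  have hm := SimpleGraph.pathGraph_preconnected m
  have hk := SimpleGraph.pathGraph_preconnected k
  have h₁ := unitStackable_boxProd hm hk
    (isGeodesicRay_pathGraph_down a 1) (isGeodesicRay_pathGraph_up b 0) rfl
  have h₂ := unitStackable_boxProd hm hk
    (isGeodesicRay_pathGraph_up a 0) (isGeodesicRay_pathGraph_up b 1) rfl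
  have h₃ := unitStackable_boxProd hm hk
    (isGeodesicRay_pathGraph_up a 1) (isGeodesicRay_pathGraph_down b 0) rfl
  have h₄ := unitStackable_boxProd hm hk
    (isGeodesicRay_pathGraph_down a 0) (isGeodesicRay_pathGraph_down b 1) rfl
  -- the four quadrants are pairwise disjoint, avoid `(a, b)` and cover the rest of the grid
  refine (((h₁.union h₂ ?_ ?_).union h₃ ?_ ?_).union h₄ ?_ ?_).isStackableAt ?_ <;>
    simp [disjoint_left, Finset.ext_iff, Prod.ext_iff, Fin.ext_iff] <;> omega

theorem grid_stackable (m k : ℕ) (hm : 1 ≤ m) (hk : 1 ≤ k) :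
    IsStackable ((SimpleGraph.pathGraph m).boxProd (SimpleGraph.pathGraph k)) :=
  grid_stackable_general m k
end

section
/- Let T be a finite tree and r a vertex of T of eccentricity 2 (max over vertices v of dist_T(r,v) equals 2). Then T is r-stackable if and only if every vertex of T other than r has degree at most 2 (equivalently, T is a spider rooted at r). -/
open Finset Function SimpleGraph

/-!
Stacking sequences are recorded backwards by a forest `F` on the vertices that still carry cups:
`F u` is the vertex onto which the cups of `u` are eventually moved, and at that moment `u`
carries exactly the cups of its `F`-subtree, which therefore number `dist u (F u)`. Such a
forest exists for the stacked configuration and survives undoing a move, so an `r`-stackable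
tree has one for the configuration `1`. There subtree sizes are distances, hence at most `4`,
and they increase strictly towards the root, so every subtree below `r` has at most two
vertices. A pendant leaf at `a` then either moves onto `a` or receives the single cup of `a`,
and two pendant leaves at the same `a ≠ r` cannot both do so.

Conversely, in a spider of depth two each leg `r - a - x` is collapsed by moving the cup of `a`
onto `x` and then the two cups of `x` onto `r`; legs `r - x` are moved onto `r` directly.
-/

namespace SimpleGraph

variable {V : Type*} {G : SimpleGraph V}

lemma exists_adj_adj_of_dist_eq_two {u v : V} (h : G.dist u v = 2) :
    ∃ a, G.Adj u a ∧ G.Adj a v := by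
  have h2 : G.edist u v = 2 := by
    rw [dist, ENat.toNat_eq_iff two_ne_zero] at h
    exact_mod_cast h
  obtain ⟨a, ha⟩ := (edist_eq_two_iff.mp h2).2.2
  obtain ⟨hua, hva⟩ := G.mem_commonNeighbors.mp ha
  exact ⟨a, hua, hva.symm⟩

lemma IsAcyclic.eq_of_adj_of_adj (hG : G.IsAcyclic) {u v a b : V} (huv : u ≠ v)
    (hua : G.Adj u a) (hav : G.Adj a v) (hub : G.Adj u b) (hbv : G.Adj b v) : a = b := by
  have hp : ∀ {c} (huc : G.Adj u c) (hcv : G.Adj c v), (Walk.cons huc (.cons hcv .nil)).IsPath :=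
    fun huc hcv => by simp [huc.ne, hcv.ne, huv]
  have := congrArg (·.1.support) <| (hG.subsingleton_path u v).elim ⟨_, hp hua hav⟩ ⟨_, hp hub hbv⟩
  simpa using this

section Eccentricity

variable {r : V} (hG : G.IsTree) (hecc : ∀ v, G.dist r v ≤ 2)
include hG hecc

lemma IsTree.adj_root_of_adj_of_dist_eq_two {x w : V} (hx : G.dist r x = 2) (hwx : G.Adj w x) :
    G.Adj r w := by
  have := hG.dist_eq_dist_add_one_of_adj r hwx
  have := hecc w
  exact dist_eq_one_iff_adj.mp (by omega)

lemma IsTree.exists_forall_adj_iff_of_dist_eq_two {x : V} (hx : G.dist r x = 2) :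
    ∃ a, G.Adj r a ∧ ∀ w, G.Adj w x ↔ w = a := by
  obtain ⟨a, hra, hax⟩ := exists_adj_adj_of_dist_eq_two hx
  have hrx : r ≠ x := by rintro rfl; simp at hx
  refine ⟨a, hra, fun w => ⟨fun hwx => ?_, fun h => h ▸ hax⟩⟩
  exact hG.isAcyclic.eq_of_adj_of_adj hrx (hG.adj_root_of_adj_of_dist_eq_two hecc hx hwx) hwx
    hra hax

lemma IsTree.exists_pendant_pair_of_two_lt_degree [Fintype V] [DecidableEq V] [DecidableRel G.Adj]
    {v : V} (hv : v ≠ r) (hdeg : 2 < G.degree v) :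
    ∃ x y, x ≠ y ∧ x ≠ r ∧ y ≠ r ∧ (∀ w, G.Adj w x ↔ w = v) ∧ (∀ w, G.Adj w y ↔ w = v) := by
  have hrv : G.Adj r v := by
    refine dist_eq_one_iff_adj.mp (le_antisymm ?_ (hG.connected.pos_dist_of_ne hv.symm))
    by_contra! h2
    obtain ⟨a, -, ha⟩ := hG.exists_forall_adj_iff_of_dist_eq_two hecc
      (x := v) (by have := hecc v; omega)
    have : G.neighborFinset v ⊆ {a} := fun w hw => by
      simpa [ha] using ((G.mem_neighborFinset _ _).mp hw).symm
    have := card_le_card this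
    simp only [card_neighborFinset_eq_degree, card_singleton] at this
    omega
  have pendant : ∀ x, x ≠ r → G.Adj v x → ∀ w, G.Adj w x ↔ w = v := by
    intro x hx hvx
    have hx2 : G.dist r x = 2 := by
      have := hG.dist_eq_dist_add_one_of_adj r hvx
      have := hG.connected.pos_dist_of_ne hx.symm
      rw [dist_eq_one_iff_adj.mpr hrv] at *
      omega
    obtain ⟨a, -, ha⟩ := hG.exists_forall_adj_iff_of_dist_eq_two hecc hx2
    simpa [(ha v).mp hvx] using ha
  have : 1 < ((G.neighborFinset v).erase r).card := by
    rw [card_erase_of_mem (by simpa using hrv.symm), card_neighborFinset_eq_degree]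
    omega
  obtain ⟨x, hx, y, hy, hxy⟩ := one_lt_card.mp this
  simp only [mem_erase, mem_neighborFinset] at hx hy
  exact ⟨x, y, hxy, hx.1, hy.1, pendant x hx.1 hx.2, pendant y hy.1 hy.2⟩

end Eccentricity

end SimpleGraph

section Moves

variable {V : Type*} [Fintype V] [DecidableEq V] {G : SimpleGraph V}

lemma Finset.sum_eq_sum_of_eq_off_pair {M : Type*} [AddCommMonoid M] {f g : V → M} {u v : V}
    (huv : u ≠ v) (hpair : f u + f v = g u + g v) (hoff : ∀ w, w ≠ u → w ≠ v → f w = g w) :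
    ∑ w, f w = ∑ w, g w := by
  rw [← sum_sdiff (subset_univ {u, v}), ← sum_sdiff (subset_univ {u, v}) (f := g),
    sum_pair huv, sum_pair huv, hpair]
  congr 1
  refine sum_congr rfl fun w hw => ?_
  simp only [mem_sdiff, mem_univ, mem_insert, mem_singleton, not_or, true_and] at hw
  exact hoff w hw.1 hw.2

lemma CupMove.sum_eq {C C' : V → ℕ} (h : CupMove G C C') : ∑ w, C' w = ∑ w, C w := by
  obtain ⟨u, v, huv, -, -, -, hC'⟩ := h
  refine sum_eq_sum_of_eq_off_pair huv ?_ fun w hwu hwv => ?_ <;> simp [*, huv.symm]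

lemma IsStackableConf.of_reflTransGen {C C' : V → ℕ} {r : V}
    (h : Relation.ReflTransGen (CupMove G) C C') (h' : IsStackableConf G C' r) :
    IsStackableConf G C r := by
  have hsum : ∑ w, C' w = ∑ w, C w := by
    clear h'
    induction h with
    | refl => rfl
    | tail _ hmove ih => rw [hmove.sum_eq, ih]
  unfold IsStackableConf at *
  rw [hsum] at h'
  exact h.trans h'

end Moves

section Descendants

variable {α : Type*} {F : α → α} {r u v w : α}

def IsDescendant (F : α → α) (w v : α) : Prop := ∃ k, F^[k] w = v

namespace IsDescendant

lemma refl (F : α → α) (v : α) : IsDescendant F v v := ⟨0, rfl⟩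

lemma self_apply (F : α → α) (v : α) : IsDescendant F v (F v) := ⟨1, rfl⟩

lemma trans {x : α} (hwv : IsDescendant F w v) (hvx : IsDescendant F v x) : IsDescendant F w x := by
  obtain ⟨k, rfl⟩ := hwv
  obtain ⟨l, rfl⟩ := hvx
  exact ⟨l + k, iterate_add_apply F l k w⟩

lemma mem_of_mapsTo {s : Set α} (hF : Set.MapsTo F s s) (hw : w ∈ s) (hwv : IsDescendant F w v) :
    v ∈ s := by
  obtain ⟨k, rfl⟩ := hwv
  exact hF.iterate k hw

lemma antisymm (hr : F r = r) (hv : IsDescendant F v r) (hwv : IsDescendant F w v)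
    (hvw : IsDescendant F v w) : w = v := by
  obtain ⟨k, hk⟩ := hwv
  obtain ⟨l, hl⟩ := hvw
  obtain ⟨m, hm⟩ := hv
  rcases Nat.eq_zero_or_eq_succ_pred (k + l) with h0 | hn
  · simpa [show k = 0 by omega] using hk
  have hper : IsPeriodicPt F (k + l) v := by
    rw [IsPeriodicPt, IsFixedPt, iterate_add_apply, hl, hk]
  have hvr : v = r := by
    rw [← (hper.mul_const m).eq, hn, Nat.succ_mul, iterate_add_apply, hm, iterate_fixed hr]
  rw [← hl, hvr, iterate_fixed hr]

end IsDescendant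

lemma isDescendant_iff_apply_of_ne (h : w ≠ v) : IsDescendant F w v ↔ IsDescendant F (F w) v := by
  refine ⟨fun ⟨k, hk⟩ => ?_, fun ⟨k, hk⟩ => ⟨k + 1, hk⟩⟩
  rcases k with _ | k
  · exact absurd hk h
  · exact ⟨k, hk⟩

variable [DecidableEq α] {s : Set α}

lemma iterate_update_apply_of_mapsTo (hF : Set.MapsTo F s s) (hu : u ∉ s) (hw : w ∈ s) (k : ℕ) :
    (update F u v)^[k] w = F^[k] w := by
  induction k with
  | zero => rfl
  | succ k ih =>
    rw [iterate_succ_apply', iterate_succ_apply', ih,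
      update_of_ne (ne_of_mem_of_not_mem (hF.iterate k hw) hu)]

lemma isDescendant_update_iff_of_mapsTo {t : α} (hF : Set.MapsTo F s s) (hu : u ∉ s) (hw : w ∈ s) :
    IsDescendant (update F u v) w t ↔ IsDescendant F w t := by
  simp only [IsDescendant, iterate_update_apply_of_mapsTo hF hu hw]

end Descendants

section StackingForest

variable {V : Type*} [Fintype V] {G : SimpleGraph V}

open scoped Classical in
noncomputable def descendants (F : V → V) (v : V) : Finset V := {w | IsDescendant F w v}

@[simp] lemma mem_descendants {F : V → V} {v w : V} :
    w ∈ descendants F v ↔ IsDescendant F w v := by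
  simp [descendants]

noncomputable def subtreeWeight (F : V → V) (C : V → ℕ) (v : V) : ℕ :=
  ∑ w ∈ descendants F v, C w

structure IsStackingForest (G : SimpleGraph V) (C : V → ℕ) (r : V) (F : V → V) : Prop where
  one_le_root : 1 ≤ C r
  map_root : F r = r
  one_le_parent : ∀ v, 1 ≤ C v → v ≠ r → 1 ≤ C (F v)
  isDescendant_root : ∀ v, 1 ≤ C v → v ≠ r → IsDescendant F v r
  subtreeWeight_eq : ∀ v, 1 ≤ C v → v ≠ r → subtreeWeight F C v = G.dist v (F v)

namespace IsStackingForest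

variable {C C' : V → ℕ} {F : V → V} {r u v : V}

lemma mapsTo (hF : IsStackingForest G C r F) : Set.MapsTo F {w | 1 ≤ C w} {w | 1 ≤ C w} := by
  intro w hw
  by_cases hwr : w = r
  · simpa [hwr, hF.map_root] using hF.one_le_root
  · exact hF.one_le_parent w hw hwr

lemma isDescendant_root_of_one_le (hF : IsStackingForest G C r F) (hv : 1 ≤ C v) :
    IsDescendant F v r := by
  by_cases hvr : v = r
  · exact hvr ▸ .refl F v
  · exact hF.isDescendant_root v hv hvr

end IsStackingForest

variable [DecidableEq V] {C : V → ℕ} {F : V → V} {r u v t : V}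

def moveCups (C : V → ℕ) (u v : V) : V → ℕ :=
  fun w => if w = u then 0 else if w = v then C u + C v else C w

omit [Fintype V] in
lemma cupMove_iff {C' : V → ℕ} :
    CupMove G C C' ↔ ∃ u v, u ≠ v ∧ 1 ≤ C u ∧ 1 ≤ C v ∧ G.dist u v = C u ∧ C' = moveCups C u v := by
  simp only [CupMove, funext_iff, moveCups]

omit [Fintype V] in
lemma one_le_moveCups {w : V} (huv : u ≠ v) (hwu : w ≠ u) (hw : 1 ≤ C w) :
    1 ≤ moveCups C u v w := by
  by_cases hwv : w = v
  · subst hwv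
    simp [moveCups, hwu]
    omega
  · simpa [moveCups, hwu, hwv] using hw

lemma IsStackingForest.isDescendant_update_self_iff
    (hF : IsStackingForest G (moveCups C u v) r F) (huv : u ≠ v) (hv : 1 ≤ C v) (htu : t ≠ u) :
    IsDescendant (update F u v) u t ↔ IsDescendant F v t := by
  rw [isDescendant_iff_apply_of_ne htu.symm, update_self,
    isDescendant_update_iff_of_mapsTo hF.mapsTo (by simp [moveCups])
      (one_le_moveCups huv huv.symm hv)]

/-- Only `u` itself carries cups in the new subtree of `u`: everything else with cups moves
inside the support of `moveCups C u v`, which avoids `u`. -/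
lemma IsStackingForest.subtreeWeight_update_self (hF : IsStackingForest G (moveCups C u v) r F)
    (huv : u ≠ v) : subtreeWeight (update F u v) C u = C u := by
  refine sum_eq_single_of_mem u (by simp [IsDescendant.refl]) fun w hw hwu => ?_
  by_contra hw0
  have hw' := one_le_moveCups huv hwu (C := C) (by omega)
  have hdesc := (isDescendant_update_iff_of_mapsTo hF.mapsTo (by simp [moveCups]) hw').mp
    (mem_descendants.mp hw)
  simpa [moveCups] using hdesc.mem_of_mapsTo hF.mapsTo hw'

lemma IsStackingForest.subtreeWeight_update_of_ne (hF : IsStackingForest G (moveCups C u v) r F)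
    (huv : u ≠ v) (hv : 1 ≤ C v) (htu : t ≠ u) :
    subtreeWeight (update F u v) C t = subtreeWeight F (moveCups C u v) t := by
  have hu : u ∉ {w | 1 ≤ moveCups C u v w} := by simp [moveCups]
  rw [subtreeWeight, subtreeWeight, descendants, descendants, sum_filter, sum_filter]
  refine sum_eq_sum_of_eq_off_pair huv ?_ fun w hwu hwv => ?_
  · rw [hF.isDescendant_update_self_iff huv hv htu,
      isDescendant_update_iff_of_mapsTo hF.mapsTo hu (one_le_moveCups huv huv.symm hv)]
    split_ifs <;> simp [moveCups, huv.symm]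
  · rw [show moveCups C u v w = C w by simp [moveCups, hwu, hwv]]
    by_cases hw : 1 ≤ C w
    · rw [isDescendant_update_iff_of_mapsTo (v := v) hF.mapsTo hu (one_le_moveCups huv hwu hw)]
    · simp [show C w = 0 by omega]

lemma IsStackingForest.update_of_move (hF : IsStackingForest G (moveCups C u v) r F)
    (huv : u ≠ v) (hv : 1 ≤ C v) (hd : G.dist u v = C u) :
    IsStackingForest G C r (update F u v) := by
  have hu : u ∉ {w | 1 ≤ moveCups C u v w} := by simp [moveCups]
  have hur : u ≠ r := fun h => hu (h ▸ hF.one_le_root)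
  have lift := fun {w} => one_le_moveCups (C := C) (w := w) huv
  have hC : ∀ w, w ≠ u → w ≠ v → moveCups C u v w = C w := fun w hwu hwv => by
    simp [moveCups, hwu, hwv]
  refine ⟨?_, by rw [update_of_ne hur.symm, hF.map_root], fun t ht htr => ?_, fun t ht htr => ?_,
    fun t ht htr => ?_⟩
  · by_cases hvr : r = v
    · rwa [hvr]
    · rw [← hC r hur.symm hvr]; exact hF.one_le_root
  · by_cases htu : t = u
    · rwa [htu, update_self]
    · have := hF.one_le_parent t (lift htu ht) htr
      rw [update_of_ne htu]
      by_cases hFt : F t = v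
      · rwa [hFt]
      · rwa [← hC _ (fun h => hu (by rw [h] at this; exact this)) hFt]
  · by_cases htu : t = u
    · subst htu
      rw [hF.isDescendant_update_self_iff huv hv hur.symm]
      exact hF.isDescendant_root_of_one_le (lift huv.symm hv)
    · exact (isDescendant_update_iff_of_mapsTo hF.mapsTo hu (lift htu ht)).mpr
        (hF.isDescendant_root t (lift htu ht) htr)
  · by_cases htu : t = u
    · rw [htu, update_self, hd, hF.subtreeWeight_update_self huv]
    · rw [update_of_ne htu, hF.subtreeWeight_update_of_ne huv hv htu,
        hF.subtreeWeight_eq t (lift htu ht) htr]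

end StackingForest

section StackingForestExistence

variable {V : Type*} [Fintype V] [DecidableEq V] {G : SimpleGraph V} {C C' : V → ℕ} {r : V}

lemma CupMove.exists_isStackingForest (hmove : CupMove G C C')
    (h : ∃ F, IsStackingForest G C' r F) : ∃ F, IsStackingForest G C r F := by
  obtain ⟨u, v, huv, -, hv, hd, rfl⟩ := cupMove_iff.mp hmove
  obtain ⟨F, hF⟩ := h
  exact ⟨_, hF.update_of_move huv hv hd⟩

lemma isStackingForest_id {n : ℕ} (hn : 1 ≤ n) :
    IsStackingForest G (fun w => if w = r then n else 0) r id := by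
  refine ⟨by simpa using hn, rfl, ?_, ?_, ?_⟩ <;> intro v hv hvr <;> simp [hvr] at hv

lemma IsStackableConf.exists_isStackingForest (h : IsStackableConf G C r) (hr : 1 ≤ C r) :
    ∃ F, IsStackingForest G C r F := by
  have hsum : 1 ≤ ∑ w, C w := hr.trans (single_le_sum (by simp) (mem_univ r))
  unfold IsStackableConf at h
  generalize ∑ w, C w = n at h hsum
  clear hr
  induction h using Relation.ReflTransGen.head_induction_on with
  | refl => exact ⟨id, isStackingForest_id hsum⟩
  | head hmove _ ih => exact hmove.exists_isStackingForest ih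

end StackingForestExistence

section AllOnes

variable {V : Type*} [Fintype V] {G : SimpleGraph V} {F : V → V} {r v w : V}

lemma descendants_ssubset_descendants (hr : F r = r) (hv : IsDescendant F v r)
    (hwv : IsDescendant F w v) (hne : w ≠ v) : descendants F w ⊂ descendants F v := by
  refine (ssubset_iff_of_subset fun x hx => ?_).mpr ⟨v, by simp [IsDescendant.refl], ?_⟩
  · exact mem_descendants.mpr ((mem_descendants.mp hx).trans hwv)
  · exact fun hvw => hne (hv.antisymm hr hwv (mem_descendants.mp hvw))

lemma card_descendants_pos (F : V → V) (v : V) : 0 < #(descendants F v) :=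
  card_pos.mpr ⟨v, by simp [IsDescendant.refl]⟩

namespace IsStackingForest

variable (hF : IsStackingForest G (fun _ => 1) r F)
include hF

lemma card_descendants_eq_dist (hv : v ≠ r) : #(descendants F v) = G.dist v (F v) := by
  rw [card_eq_sum_ones, ← hF.subtreeWeight_eq v le_rfl hv, subtreeWeight]

lemma card_descendants_lt (hwv : IsDescendant F w v) (hne : w ≠ v) :
    #(descendants F w) < #(descendants F v) :=
  card_lt_card <| descendants_ssubset_descendants hF.map_root
    (hF.isDescendant_root_of_one_le le_rfl) hwv hne

lemma apply_ne (hv : v ≠ r) : F v ≠ v := by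
  intro h
  have := hF.card_descendants_eq_dist hv
  rw [h, dist_self] at this
  exact (card_descendants_pos F v).ne' this

lemma card_descendants_lt_apply (hv : v ≠ r) : #(descendants F v) < #(descendants F (F v)) :=
  hF.card_descendants_lt (.self_apply F v) (hF.apply_ne hv).symm

lemma card_descendants_le_two (hG : G.Connected) (hecc : ∀ v, G.dist r v ≤ 2) (hv : v ≠ r) :
    #(descendants F v) ≤ 2 := by
  have hle : ∀ w, w ≠ r → #(descendants F w) ≤ 4 := fun w hw => by
    have : G.dist w (F w) ≤ G.dist w r + G.dist r (F w) := hG.dist_triangle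
    have : G.dist w r ≤ 2 := SimpleGraph.dist_comm (G := G) ▸ hecc w
    have := hecc (F w)
    rw [hF.card_descendants_eq_dist hw]
    omega
  have hup : ∀ w, w ≠ r → 3 ≤ #(descendants F w) → F w ≠ r ∧ 4 ≤ #(descendants F (F w)) := by
    intro w hw h3
    refine ⟨fun h => ?_, by have := hF.card_descendants_lt_apply hw; omega⟩
    have := hecc w
    rw [SimpleGraph.dist_comm, ← h, ← hF.card_descendants_eq_dist hw] at this
    omega
  by_contra! h3
  obtain ⟨h1, h4⟩ := hup v hv h3
  obtain ⟨h2, h5⟩ := hup (F v) h1 (by omega)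
  have := hF.card_descendants_lt_apply h1
  have := hle _ h2
  omega

variable (hG : G.Connected) (hecc : ∀ v, G.dist r v ≤ 2)
include hG hecc

lemma apply_eq_or_of_forall_adj_iff {z a : V} (hz : z ≠ r) (ha : ∀ w, G.Adj w z ↔ w = a) :
    F z = a ∨ F a = z ∧ #(descendants F a) = 1 := by
  have hd := hF.card_descendants_eq_dist hz
  have := hF.card_descendants_le_two hG hecc hz
  have := card_descendants_pos F z
  rcases (by omega : #(descendants F z) = 1 ∨ #(descendants F z) = 2) with h1 | h2
  · exact .inl <| (ha (F z)).mp (dist_eq_one_iff_adj.mp (by rw [← hd, h1])).symm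
  obtain ⟨c, hc, hcz⟩ := exists_mem_ne (by omega : 1 < #(descendants F z)) z
  have hcz' : IsDescendant F c z := mem_descendants.mp hc
  have hcr : c ≠ r := by
    rintro rfl
    obtain ⟨k, hk⟩ := hcz'
    rw [iterate_fixed hF.map_root] at hk
    exact hz hk.symm
  have := hF.card_descendants_lt hcz' hcz
  have hc1 : #(descendants F c) = 1 := by have := card_descendants_pos F c; omega
  have hFc : F c = z := by
    by_contra hne
    have := hF.card_descendants_lt_apply hcr
    have := hF.card_descendants_lt ((isDescendant_iff_apply_of_ne hcz).mp hcz') hne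
    omega
  have hca : c = a := (ha c).mp <| dist_eq_one_iff_adj.mp <| by
    rw [← hFc, ← hF.card_descendants_eq_dist hcr, hc1]
  exact .inr ⟨hca ▸ hFc, hca ▸ hc1⟩

lemma false_of_pendant_pair {a x y : V} (har : a ≠ r) (hxy : x ≠ y) (hxr : x ≠ r) (hyr : y ≠ r)
    (hx : ∀ w, G.Adj w x ↔ w = a) (hy : ∀ w, G.Adj w y ↔ w = a) : False := by
  have hxa : x ≠ a := ((hx a).mpr rfl).ne'
  have hya : y ≠ a := ((hy a).mpr rfl).ne'
  have := card_descendants_pos F x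
  have := card_descendants_pos F y
  rcases hF.apply_eq_or_of_forall_adj_iff hG hecc hxr hx with hFx | ⟨hFa, ha1⟩ <;>
    rcases hF.apply_eq_or_of_forall_adj_iff hG hecc hyr hy with hFy | ⟨hFa', ha1'⟩
  · have := hF.card_descendants_le_two hG hecc har
    have : 2 < #(descendants F a) := two_lt_card.mpr ⟨x, by simpa using ⟨1, hFx⟩, y,
      by simpa using ⟨1, hFy⟩, a, by simp [IsDescendant.refl], hxy, hxa, hya⟩
    omega
  · have := hF.card_descendants_lt ⟨1, hFx⟩ hxa
    omega
  · have := hF.card_descendants_lt ⟨1, hFy⟩ hya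
    omega
  · exact hxy (hFa.symm.trans hFa')

end IsStackingForest

end AllOnes

section Spider

variable {V : Type*} [DecidableEq V] {T : SimpleGraph V} {r : V}

def onesWithRoot (r : V) (m : ℕ) (A : Finset V) : V → ℕ :=
  fun w => if w = r then m else if w ∈ A then 1 else 0

lemma isStackableConf_onesWithRoot_empty [Fintype V] (m : ℕ) :
    IsStackableConf T (onesWithRoot r m ∅) r := by
  have : (fun w => if w = r then ∑ v, onesWithRoot r m ∅ v else 0) = onesWithRoot r m ∅ := by
    funext w
    simp [onesWithRoot]
  rw [IsStackableConf, this]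

lemma cupMove_onesWithRoot_of_adj {m : ℕ} {A : Finset V} {x : V} (hm : 1 ≤ m) (hxA : x ∈ A)
    (hrx : T.Adj r x) :
    CupMove T (onesWithRoot r m A) (onesWithRoot r (m + 1) (A.erase x)) := by
  have hxr : x ≠ r := hrx.ne'
  refine ⟨x, r, hxr, ?_, ?_, ?_, fun w => ?_⟩ <;>
    simp [onesWithRoot, hxr, hxA, hm, SimpleGraph.dist_comm, dist_eq_one_iff_adj.mpr hrx]
  split_ifs <;> grind

lemma reflTransGen_onesWithRoot_of_pendant {m : ℕ} {A : Finset V} {a x : V} (hm : 1 ≤ m)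
    (haA : a ∈ A) (hxA : x ∈ A) (hrx : T.dist r x = 2) (hax : T.Adj a x) :
    Relation.ReflTransGen (CupMove T) (onesWithRoot r m A)
      (onesWithRoot r (m + 2) ((A.erase x).erase a)) := by
  have hxr : x ≠ r := by rintro rfl; simp at hrx
  have har : a ≠ r := by rintro rfl; simp [dist_eq_one_iff_adj.mpr hax] at hrx
  have hax' : a ≠ x := hax.ne
  refine .head (b := update (onesWithRoot r m (A.erase a)) x 2) ?_ (.single ?_)
  · refine ⟨a, x, hax', ?_, ?_, ?_, fun w => ?_⟩ <;>
      simp [onesWithRoot, update_apply, har, hxr, haA, hxA, dist_eq_one_iff_adj.mpr hax]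
    split_ifs <;> grind
  · refine ⟨x, r, hxr, ?_, ?_, ?_, fun w => ?_⟩ <;>
      simp [onesWithRoot, update_apply, hxr.symm, hm, SimpleGraph.dist_comm, hrx]
    split_ifs <;> grind

variable [Fintype V] [DecidableRel T.Adj] (hT : T.IsTree) (hecc : ∀ v, T.dist r v ≤ 2)
  (hdeg : ∀ v, v ≠ r → T.degree v ≤ 2)
include hT hecc hdeg

lemma SimpleGraph.IsTree.isStackableConf_onesWithRoot (A : Finset V) :
    ∀ m, 1 ≤ m → r ∉ A → (∀ x ∈ A, T.dist r x = 2 → ∀ w, T.Adj w x → w ∈ A) →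
      IsStackableConf T (onesWithRoot r m A) r := by
  induction A using Finset.strongInduction with | H A ih => ?_
  intro m hm hrA hclosed
  by_cases hfar : ∃ x ∈ A, T.dist r x = 2
  · obtain ⟨x, hxA, hx⟩ := hfar
    obtain ⟨a, hra, ha⟩ := hT.exists_forall_adj_iff_of_dist_eq_two hecc hx
    have hax : T.Adj a x := (ha a).mpr rfl
    refine .of_reflTransGen
      (reflTransGen_onesWithRoot_of_pendant hm (hclosed x hxA hx a hax) hxA hx hax)
      (ih _ ((erase_subset _ _).trans_ssubset (erase_ssubset hxA)) _ (by omega) (by simp [hrA])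
        fun y hy hy2 w hwy => ?_)
    simp only [mem_erase] at hy ⊢
    have hrw : T.Adj r w := hT.adj_root_of_adj_of_dist_eq_two hecc hy2 hwy
    refine ⟨fun hwa => ?_, fun hwx => ?_, hclosed y hy.2.2 hy2 w hwy⟩
    · have hrx : r ≠ x := by rintro rfl; simp at hx
      have hry : r ≠ y := by rintro rfl; simp at hy2
      have : 2 < T.degree w := by
        rw [← card_neighborFinset_eq_degree]
        exact two_lt_card.mpr ⟨r, by simpa using hrw.symm, x, by simpa [hwa] using hax,
          y, by simpa using hwy, hrx, hry, Ne.symm hy.2.1⟩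
      have := hdeg w (hwa ▸ hra.ne')
      omega
    · rw [← hwx, dist_eq_one_iff_adj.mpr hrw] at hx
      omega
  · rcases A.eq_empty_or_nonempty with rfl | ⟨x, hxA⟩
    · exact isStackableConf_onesWithRoot_empty m
    · have hrx : T.Adj r x := by
        refine dist_eq_one_iff_adj.mp (le_antisymm ?_ ?_)
        · have := hecc x
          have : T.dist r x ≠ 2 := fun h => hfar ⟨x, hxA, h⟩
          omega
        · exact hT.connected.pos_dist_of_ne fun h => hrA (h ▸ hxA)
      exact .of_reflTransGen (.single (cupMove_onesWithRoot_of_adj hm hxA hrx))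
        (ih _ (erase_ssubset hxA) _ (by omega) (by simp [hrA])
          fun y hy hy2 => absurd ⟨y, mem_of_mem_erase hy, hy2⟩ hfar)

lemma SimpleGraph.IsTree.isStackableAt_of_degree_le_two : IsStackableAt T r := by
  have hones : onesWithRoot r 1 (univ.erase r) = fun _ => 1 := by
    funext w
    by_cases hw : w = r <;> simp [onesWithRoot, hw]
  rw [IsStackableAt, ← hones]
  refine hT.isStackableConf_onesWithRoot hecc hdeg _ 1 le_rfl (by simp) fun x _ hx w hwx => ?_
  simp only [mem_erase, mem_univ, and_true]
  rintro rfl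
  simp [dist_eq_one_iff_adj.mpr hwx] at hx

end Spider

theorem tree_ecc_two_stackable_iff_spider_general {V : Type*} [Fintype V] [DecidableEq V]
    (T : SimpleGraph V) [DecidableRel T.Adj] (hT : T.IsTree) (r : V)
    (hecc_le : ∀ v : V, T.dist r v ≤ 2) :
    IsStackableAt T r ↔ ∀ v : V, v ≠ r → T.degree v ≤ 2 := by
  refine ⟨fun hst v hvr => ?_, hT.isStackableAt_of_degree_le_two hecc_le⟩
  by_contra! hdeg
  obtain ⟨x, y, hxy, hxr, hyr, hx, hy⟩ := hT.exists_pendant_pair_of_two_lt_degree hecc_le hvr hdeg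
  obtain ⟨F, hF⟩ := hst.exists_isStackingForest le_rfl
  exact hF.false_of_pendant_pair hT.connected hecc_le hvr hxy hxr hyr hx hy

theorem tree_ecc_two_stackable_iff_spider {V : Type*} [Fintype V] [DecidableEq V]
    (T : SimpleGraph V) [DecidableRel T.Adj] (hT : T.IsTree) (r : V)
    (hecc_le : ∀ v : V, T.dist r v ≤ 2) (hecc_eq : ∃ v : V, T.dist r v = 2) :
    IsStackableAt T r ↔ ∀ v : V, v ≠ r → T.degree v ≤ 2 :=
  tree_ecc_two_stackable_iff_spider_general T hT r hecc_le
end
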